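/- arXiv:math/0512189 — 2 statements merged into one kernel-verified Lean document; each statement's English description precedes it below -/
import Mathlib

section
/- In the universal Coxeter group of rank 3, i.e., the Coxeter group with three generators s, t, u and all pairwise products of infinite order, the set {(st)ᵏu : k ∈ ℕ} is an infinite antichain in the right weak order. -/
/-- The right weak order on a Coxeter group: `v ≤_R w` iff `ℓ(v) + ℓ(v⁻¹w) = ℓ(w)`. -/
def weakLE {B : Type*} {W : Type*} [Group W] {M : CoxeterMatrix B}
    (cs : CoxeterSystem M W) (v w : W) : Prop :=
  cs.length v + cs.length (v⁻¹ * w) = cs.length w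

/-- The Coxeter matrix of the universal Coxeter group of rank 3:
all off-diagonal entries are `∞` (encoded as `0`). -/
def univMatrix3 : CoxeterMatrix (Fin 3) where
  M := Matrix.of fun i j => if i = j then 1 else 0
  off_diagonal := by intro i i' h; simp [h]

/-!
In a universal Coxeter group every word without two equal adjacent letters is reduced: letting
`s i` act on such words by cancelling a leading `i` or else prepending `i` gives involutions, which
satisfy the Coxeter relations because there are no others, and the word reached from the empty
word by acting with a word `ω` is never longer than `ω`. Hence `(st)ᵏu` has length `2k + 1`, while
for `j ≠ k` the quotient `((st)ʲu)⁻¹ (st)ᵏu = u (st)ᵏ⁻ʲ u` has length `2|k - j| + 2`, which is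
more than `ℓ((st)ᵏu) - ℓ((st)ʲu)`.
-/

def CoxeterMatrix.IsUniversal {B : Type*} (M : CoxeterMatrix B) : Prop :=
  ∀ i j, i ≠ j → M i j = 0

namespace List

variable {α : Type*} {l : List α} {a : α}

theorem isChain_ne_append_singleton (hl : l.IsChain (· ≠ ·)) (ha : a ∉ l) :
    (l ++ [a]).IsChain (· ≠ ·) := by
  refine hl.append (isChain_singleton a) fun b hb c hc hbc => ha ?_
  obtain rfl : a = c := by simpa using hc
  exact hbc ▸ mem_of_mem_getLast? hb

theorem isChain_ne_cons_append_singleton (hl : l.IsChain (· ≠ ·)) (hne : l ≠ []) (ha : a ∉ l) :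
    (a :: l ++ [a]).IsChain (· ≠ ·) := by
  refine (isChain_ne_append_singleton hl ha).cons fun b hb hab => ha ?_
  rw [head?_append_of_ne_nil _ hne] at hb
  exact hab ▸ mem_of_mem_head? hb

end List

section NormalForm

variable {B : Type*} [DecidableEq B]

def cancelOrCons (i : B) : List B → List B
  | j :: l => if j = i then l else i :: j :: l
  | [] => [i]

theorem isChain_cancelOrCons (i : B) {l : List B} (hl : l.IsChain (· ≠ ·)) :
    (cancelOrCons i l).IsChain (· ≠ ·) := by
  cases l with
  | nil => exact List.isChain_singleton i
  | cons j l =>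
    by_cases hj : j = i
    · simpa [cancelOrCons, hj] using hl.tail
    · simpa [cancelOrCons, hj, Ne.symm hj] using hl

theorem cancelOrCons_of_isChain_cons {i : B} {l : List B} (hl : (i :: l).IsChain (· ≠ ·)) :
    cancelOrCons i l = i :: l := by
  cases l with
  | nil => rfl
  | cons j l => simp [cancelOrCons, (List.isChain_cons_cons.1 hl).1.symm]

theorem cancelOrCons_cancelOrCons (i : B) {l : List B} (hl : l.IsChain (· ≠ ·)) :
    cancelOrCons i (cancelOrCons i l) = l := by
  cases l with
  | nil => simp [cancelOrCons]
  | cons j l =>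
    by_cases hj : j = i
    · subst hj
      simpa [cancelOrCons] using cancelOrCons_of_isChain_cons hl
    · simp [cancelOrCons, hj]

theorem length_cancelOrCons_le (i : B) (l : List B) :
    (cancelOrCons i l).length ≤ l.length + 1 := by
  cases l with
  | nil => simp [cancelOrCons]
  | cons j l =>
    simp only [cancelOrCons]
    split_ifs <;> simp only [List.length_cons] <;> omega

theorem length_foldr_cancelOrCons_le (ω : List B) :
    (ω.foldr cancelOrCons []).length ≤ ω.length := by
  induction ω with
  | nil => rfl
  | cons i ω ih => exact (length_cancelOrCons_le i _).trans (Nat.succ_le_succ ih)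

theorem foldr_cancelOrCons_of_isChain {ω : List B} (hω : ω.IsChain (· ≠ ·)) :
    ω.foldr cancelOrCons [] = ω := by
  induction ω with
  | nil => rfl
  | cons i ω ih => rw [List.foldr_cons, ih hω.tail, cancelOrCons_of_isChain_cons hω]

def cancelOrConsPerm (i : B) : Equiv.Perm {l : List B // l.IsChain (· ≠ ·)} :=
  Function.Involutive.toPerm (fun l => ⟨cancelOrCons i l, isChain_cancelOrCons i l.2⟩)
    fun l => Subtype.ext (cancelOrCons_cancelOrCons i l.2)

theorem CoxeterMatrix.IsUniversal.isLiftable_cancelOrConsPerm {M : CoxeterMatrix B}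
    (hM : M.IsUniversal) : M.IsLiftable cancelOrConsPerm := by
  intro i j
  by_cases hij : i = j
  · subst hij
    rw [M.diagonal, pow_one]
    exact Equiv.ext fun l => Subtype.ext (cancelOrCons_cancelOrCons i l.2)
  · rw [hM i j hij, pow_zero]

variable {W : Type*} [Group W] {M : CoxeterMatrix B} (cs : CoxeterSystem M W)

theorem CoxeterSystem.lift_cancelOrConsPerm_wordProd (hM : M.IsUniversal) (ω : List B) :
    (cs.lift ⟨cancelOrConsPerm, hM.isLiftable_cancelOrConsPerm⟩ (cs.wordProd ω) ⟨[], .nil⟩).1 =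
      ω.foldr cancelOrCons [] := by
  induction ω with
  | nil => simp
  | cons i ω ih =>
    rw [cs.wordProd_cons, map_mul, cs.lift_apply_simple, Equiv.Perm.mul_apply, List.foldr_cons, ← ih]
    rfl

end NormalForm

theorem CoxeterSystem.isReduced_of_isChain {B W : Type*} [Group W] {M : CoxeterMatrix B}
    (cs : CoxeterSystem M W) (hM : M.IsUniversal) {ω : List B}
    (hω : ω.IsChain (· ≠ ·)) : cs.IsReduced ω := by
  classical
  obtain ⟨σ, hσ, hσω⟩ := cs.exists_isReduced (cs.wordProd ω)
  have hnf := cs.lift_cancelOrConsPerm_wordProd hM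
  refine le_antisymm (cs.length_wordProd_le ω) ?_
  calc ω.length = (ω.foldr cancelOrCons []).length := by rw [foldr_cancelOrCons_of_isChain hω]
    _ = (σ.foldr cancelOrCons []).length := by rw [← hnf, ← hnf, hσω]
    _ ≤ σ.length := length_foldr_cancelOrCons_le σ
    _ = cs.length (cs.wordProd ω) := by rw [hσω, hσ.eq]

namespace CoxeterSystem

variable {B : Type*} {i i' k : B}

theorem isChain_alternatingWord (hii' : i ≠ i') (m : ℕ) :
    (alternatingWord i i' m).IsChain (· ≠ ·) := by
  refine List.isChain_iff_getElem.2 fun n hn => ?_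
  simp only [length_alternatingWord] at hn
  rw [getElem_alternatingWord _ _ _ _ (by omega), getElem_alternatingWord _ _ _ _ hn, ← add_assoc]
  by_cases h : Even (m + n) <;> simp [h, Nat.even_add_one, hii', hii'.symm]

theorem notMem_alternatingWord (hi : k ≠ i) (hi' : k ≠ i') (m : ℕ) :
    k ∉ alternatingWord i i' m := by
  rw [List.mem_iff_getElem]
  rintro ⟨n, hn, hk⟩
  rw [getElem_alternatingWord _ _ _ _ (by simpa using hn)] at hk
  split_ifs at hk
  exacts [hi hk.symm, hi' hk.symm]

variable {W : Type*} [Group W] {M : CoxeterMatrix B} (cs : CoxeterSystem M W)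

theorem wordProd_alternatingWord_two_mul (i i' : B) (n : ℕ) :
    cs.wordProd (alternatingWord i i' (2 * n)) = (cs.simple i * cs.simple i') ^ n := by
  simp [prod_alternatingWord_eq_mul_pow]

theorem length_pow_mul_simple (hM : M.IsUniversal) (hii' : i ≠ i') (hi : k ≠ i) (hi' : k ≠ i')
    (n : ℕ) : cs.length ((cs.simple i * cs.simple i') ^ n * cs.simple k) = 2 * n + 1 := by
  have hω := List.isChain_ne_append_singleton (isChain_alternatingWord hii' (2 * n))
    (notMem_alternatingWord hi hi' _)
  rw [← wordProd_alternatingWord_two_mul, ← wordProd_singleton, ← wordProd_append,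
    (cs.isReduced_of_isChain hM hω).eq, List.length_append, length_alternatingWord,
    List.length_singleton]

theorem length_simple_mul_pow_mul_simple (hM : M.IsUniversal) (hii' : i ≠ i') (hi : k ≠ i)
    (hi' : k ≠ i') {n : ℕ} (hn : n ≠ 0) :
    cs.length (cs.simple k * (cs.simple i * cs.simple i') ^ n * cs.simple k) = 2 * n + 2 := by
  have hω := List.isChain_ne_cons_append_singleton (isChain_alternatingWord hii' (2 * n))
    (by simpa [← List.length_eq_zero_iff] using hn) (notMem_alternatingWord hi hi' _)
  rw [← wordProd_alternatingWord_two_mul, ← wordProd_cons, ← wordProd_singleton,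
    ← wordProd_append, (cs.isReduced_of_isChain hM hω).eq]
  simp only [List.length_append, List.length_cons, length_alternatingWord, List.length_nil]

theorem not_weakLE_pow_mul_simple (hM : M.IsUniversal) (hii' : i ≠ i') (hi : k ≠ i)
    (hi' : k ≠ i') {j l : ℕ} (hjl : j ≠ l) :
    ¬ weakLE cs ((cs.simple i * cs.simple i') ^ j * cs.simple k)
      ((cs.simple i * cs.simple i') ^ l * cs.simple k) := by
  rw [weakLE, length_pow_mul_simple cs hM hii' hi hi', length_pow_mul_simple cs hM hii' hi hi']
  rcases Nat.lt_or_gt_of_ne hjl with h | h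
  · obtain ⟨m, rfl⟩ := Nat.exists_eq_add_of_lt h
    have hquot : ((cs.simple i * cs.simple i') ^ j * cs.simple k)⁻¹ *
        ((cs.simple i * cs.simple i') ^ (j + m + 1) * cs.simple k) =
        cs.simple k * (cs.simple i * cs.simple i') ^ (m + 1) * cs.simple k := by
      rw [mul_inv_rev, inv_simple]
      generalize cs.simple i * cs.simple i' = g
      group
    rw [hquot, length_simple_mul_pow_mul_simple cs hM hii' hi hi' m.succ_ne_zero]
    omega
  · obtain ⟨m, rfl⟩ := Nat.exists_eq_add_of_lt h
    have hquot : ((cs.simple i * cs.simple i') ^ (l + m + 1) * cs.simple k)⁻¹ *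
        ((cs.simple i * cs.simple i') ^ l * cs.simple k) =
        cs.simple k * (cs.simple i' * cs.simple i) ^ (m + 1) * cs.simple k := by
      have hinv : cs.simple i' * cs.simple i = (cs.simple i * cs.simple i')⁻¹ := by
        rw [mul_inv_rev, inv_simple, inv_simple]
      rw [mul_inv_rev, inv_simple, hinv]
      generalize cs.simple i * cs.simple i' = g
      group
    rw [hquot, length_simple_mul_pow_mul_simple cs hM hii'.symm hi' hi m.succ_ne_zero]
    omega

end CoxeterSystem

/-- In the universal Coxeter group of rank 3 with generators `s, t, u` (all
pairwise products of infinite order), the set `{(st)ᵏu : k ∈ ℕ}` is an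
infinite antichain in the right weak order. -/
theorem universal_rank3_infinite_antichain {W : Type*} [Group W]
    (cs : CoxeterSystem univMatrix3 W) :
    (Set.range fun k : ℕ =>
        (cs.simple 0 * cs.simple 1) ^ k * cs.simple 2).Infinite ∧
      IsAntichain (weakLE cs)
        (Set.range fun k : ℕ =>
          (cs.simple 0 * cs.simple 1) ^ k * cs.simple 2) := by
  have hM : univMatrix3.IsUniversal := fun i j hij => by simp [univMatrix3, hij]
  have hlen := cs.length_pow_mul_simple hM (i := 0) (i' := 1) (k := 2) (by decide) (by decide)
    (by decide)
  refine ⟨Set.infinite_range_of_injective fun j l h => ?_, ?_⟩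
  · have h := congrArg cs.length h
    simp only [hlen] at h
    omega
  · rintro _ ⟨j, rfl⟩ _ ⟨l, rfl⟩ hne
    exact cs.not_weakLE_pow_mul_simple hM (by decide) (by decide) (by decide)
      fun h => hne (h ▸ rfl)
end

section
/- Let W be a reducible Coxeter group, W = W₁ × W₂ a direct product of standard parabolic subgroups on disjoint generator sets. The right weak order on W is isomorphic to the product of the right weak orders on W₁ and W₂. Consequently, W contains an infinite antichain in the right weak order if and only if W₁ or W₂ does. -/
/-- The Coxeter matrix of a reducible Coxeter system whose diagram is the
disjoint union of the diagrams of `M₁` and `M₂` (generators from different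
components commute). -/
def CoxeterMatrix.sumMatrix {B₁ B₂ : Type*} (M₁ : CoxeterMatrix B₁)
    (M₂ : CoxeterMatrix B₂) : CoxeterMatrix (B₁ ⊕ B₂) where
  M := Matrix.of fun i j =>
    match i, j with
    | .inl a, .inl b => M₁ a b
    | .inr a, .inr b => M₂ a b
    | _, _ => 2
  isSymm := by
    unfold Matrix.IsSymm
    ext i j
    cases i <;> cases j <;>
      simp [Matrix.transpose_apply, M₁.symmetric, M₂.symmetric]
  diagonal i := by cases i <;> simp
  off_diagonal i j h := by
    cases i <;> cases j <;>
      simp_all [M₁.off_diagonal, M₂.off_diagonal, Sum.inl.injEq, Sum.inr.injEq]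


/-!
Generators from different components commute, so the simple reflections of `W` lift to
`W₁ × W₂` and back, giving an isomorphism `W ≃* W₁ × W₂`. Under it length is additive,
`ℓ(w) = ℓ₁(w₁) + ℓ₂(w₂)`: a word for `w` splits into its `B₁`-letters and its `B₂`-letters,
and conversely reduced words of `w₁` and `w₂` concatenate to a word for `w`. Since each
coordinate length satisfies the triangle inequality `ℓ(w) ≤ ℓ(v) + ℓ(v⁻¹w)`, the equation
defining `v ≤_R w` holds in `W` iff it holds in both factors.

The strict weak order is well founded (it increases length), so having no infinite antichain
is the same as being a well-quasi-order, and a product of preorders is a well-quasi-order iff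
both factors are.
-/

section WellQuasiOrdered

variable {α β : Type*} {r : α → α → Prop} {s : β → β → Prop}

theorem wellQuasiOrdered_iff_forall_isAntichain_finite [IsPreorder α r]
    (hwf : WellFounded fun a b => r a b ∧ ¬ r b a) :
    WellQuasiOrdered r ↔ ∀ A : Set α, IsAntichain r A → A.Finite := by
  let _ : Preorder α :=
    { le := r, le_refl := refl_of r, le_trans := fun _ _ _ => trans_of r }
  have : WellFoundedLT α := ⟨hwf⟩
  exact (wellQuasiOrderedLE_def α).symm.trans (wellQuasiOrderedLE_iff.trans (and_iff_right this))

theorem wellQuasiOrdered_prod_iff [IsPreorder α r] [Nonempty α] [Nonempty β] :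
    WellQuasiOrdered (fun a b : α × β => r a.1 b.1 ∧ s a.2 b.2) ↔
      WellQuasiOrdered r ∧ WellQuasiOrdered s :=
  ⟨fun h => ⟨h.of_surjective ⟨Prod.fst, And.left⟩ Prod.fst_surjective,
    h.of_surjective ⟨Prod.snd, And.right⟩ Prod.snd_surjective⟩, fun h => h.1.prod h.2⟩

end WellQuasiOrdered

namespace CoxeterSystem

section General

variable {B W : Type*} [Group W] {M : CoxeterMatrix B} (cs : CoxeterSystem M W)

theorem length_le_length_add_length_inv_mul (v w : W) :
    cs.length w ≤ cs.length v + cs.length (v⁻¹ * w) := by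
  simpa using cs.length_mul_le v (v⁻¹ * w)

theorem weakLE_iff_le {v w : W} :
    weakLE cs v w ↔ cs.length v + cs.length (v⁻¹ * w) ≤ cs.length w :=
  ⟨le_of_eq, fun h => h.antisymm (cs.length_le_length_add_length_inv_mul v w)⟩

theorem weakLE_refl (w : W) : weakLE cs w w := by
  simp [weakLE]

theorem weakLE_trans {u v w : W} (huv : weakLE cs u v) (hvw : weakLE cs v w) :
    weakLE cs u w := by
  have triangle : cs.length (u⁻¹ * w) ≤ cs.length (u⁻¹ * v) + cs.length (v⁻¹ * w) := by
    simpa [mul_assoc] using cs.length_mul_le (u⁻¹ * v) (v⁻¹ * w)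
  unfold weakLE at huv hvw
  rw [weakLE_iff_le]
  omega

instance : IsPreorder W (weakLE cs) where
  refl := cs.weakLE_refl
  trans _ _ _ := cs.weakLE_trans

theorem length_lt_of_weakLE_of_not_weakLE {v w : W} (hvw : weakLE cs v w)
    (hwv : ¬ weakLE cs w v) : cs.length v < cs.length w := by
  refine lt_of_le_of_ne (Nat.le.intro hvw) fun h => hwv ?_
  have : cs.length (v⁻¹ * w) = 0 := by unfold weakLE at hvw; omega
  rw [cs.length_eq_zero_iff, inv_mul_eq_one] at this
  exact this ▸ cs.weakLE_refl v

theorem wellFounded_weakLT : WellFounded fun v w => weakLE cs v w ∧ ¬ weakLE cs w v :=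
  Subrelation.wf (fun h => cs.length_lt_of_weakLE_of_not_weakLE h.1 h.2)
    (InvImage.wf cs.length wellFounded_lt)

theorem exists_infinite_isAntichain_weakLE_iff :
    (∃ A : Set W, A.Infinite ∧ IsAntichain (weakLE cs) A) ↔
      ¬ WellQuasiOrdered (weakLE cs) := by
  rw [wellQuasiOrdered_iff_forall_isAntichain_finite cs.wellFounded_weakLT]
  push Not
  exact exists_congr fun A => and_comm

theorem le_length_of_simple_mul {L : W → ℕ} (one : L 1 = 0)
    (simple_mul : ∀ i w, L (cs.simple i * w) ≤ L w + 1) (w : W) : L w ≤ cs.length w := by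
  have word : ∀ ω : List B, L (cs.wordProd ω) ≤ ω.length := by
    intro ω
    induction ω with
    | nil => simp [one]
    | cons i ω ih => simpa [wordProd_cons] using (simple_mul i _).trans (by omega)
  obtain ⟨ω, hω, rfl⟩ := cs.exists_isReduced w
  exact hω.eq ▸ word ω

theorem length_map_le {B' W' : Type*} [Group W'] {M' : CoxeterMatrix B'}
    (cs' : CoxeterSystem M' W') (f : W →* W') (hf : ∀ i, cs'.length (f (cs.simple i)) ≤ 1)
    (w : W) : cs'.length (f w) ≤ cs.length w :=
  cs.le_length_of_simple_mul (L := fun w => cs'.length (f w)) (by simp)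
    (fun i w => by
      have := cs'.length_mul_le (f (cs.simple i)) (f w)
      have := hf i
      simp only [map_mul]
      omega) w

theorem commute_simple_of_eq_two {i i' : B} (h : M i i' = 2) :
    Commute (cs.simple i) (cs.simple i') := by
  have hsq := cs.simple_mul_simple_pow i i'
  rw [h, pow_two, mul_eq_one_iff_eq_inv, mul_inv_rev, inv_simple, inv_simple] at hsq
  exact hsq

end General

section Reducible

variable {B₁ B₂ W W₁ W₂ : Type*} [Group W] [Group W₁] [Group W₂]
  {M₁ : CoxeterMatrix B₁} {M₂ : CoxeterMatrix B₂}
  (cs : CoxeterSystem (M₁.sumMatrix M₂) W) (cs₁ : CoxeterSystem M₁ W₁)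
  (cs₂ : CoxeterSystem M₂ W₂)

def toProd : W →* W₁ × W₂ :=
  cs.lift ⟨Sum.elim (fun i => (cs₁.simple i, 1)) (fun j => (1, cs₂.simple j)), by
    rintro (i | i) (i' | i') <;>
      simp [Prod.ext_iff, cs₁.simple_mul_simple_pow, cs₂.simple_mul_simple_pow,
        CoxeterMatrix.sumMatrix]⟩

@[simp]
theorem toProd_simple_inl (i : B₁) :
    cs.toProd cs₁ cs₂ (cs.simple (.inl i)) = (cs₁.simple i, 1) :=
  cs.lift_apply_simple _ _

@[simp]
theorem toProd_simple_inr (j : B₂) :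
    cs.toProd cs₁ cs₂ (cs.simple (.inr j)) = (1, cs₂.simple j) :=
  cs.lift_apply_simple _ _

def inlHom : W₁ →* W :=
  cs₁.lift ⟨fun i => cs.simple (.inl i), fun i i' => cs.simple_mul_simple_pow (.inl i) (.inl i')⟩

def inrHom : W₂ →* W :=
  cs₂.lift ⟨fun j => cs.simple (.inr j), fun j j' => cs.simple_mul_simple_pow (.inr j) (.inr j')⟩

@[simp]
theorem inlHom_simple (i : B₁) : cs.inlHom cs₁ (cs₁.simple i) = cs.simple (.inl i) :=
  cs₁.lift_apply_simple _ _

@[simp]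
theorem inrHom_simple (j : B₂) : cs.inrHom cs₂ (cs₂.simple j) = cs.simple (.inr j) :=
  cs₂.lift_apply_simple _ _

theorem commute_inlHom_inrHom (a : W₁) (b : W₂) :
    Commute (cs.inlHom cs₁ a) (cs.inrHom cs₂ b) := by
  induction a using cs₁.simple_induction with
  | simple i =>
    induction b using cs₂.simple_induction with
    | simple j => simpa using cs.commute_simple_of_eq_two rfl
    | one => simp
    | mul x y hx hy => simpa using hx.mul_right hy
  | one => simp
  | mul x y hx hy => simpa using hx.mul_left hy

def ofProd : W₁ × W₂ →* W :=
  (cs.inlHom cs₁).noncommCoprod (cs.inrHom cs₂) (cs.commute_inlHom_inrHom cs₁ cs₂)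

theorem toProd_comp_inlHom : (cs.toProd cs₁ cs₂).comp (cs.inlHom cs₁) = MonoidHom.inl W₁ W₂ :=
  cs₁.ext_simple fun i => by simp

theorem toProd_comp_inrHom : (cs.toProd cs₁ cs₂).comp (cs.inrHom cs₂) = MonoidHom.inr W₁ W₂ :=
  cs₂.ext_simple fun j => by simp

theorem ofProd_comp_toProd : (cs.ofProd cs₁ cs₂).comp (cs.toProd cs₁ cs₂) = MonoidHom.id W :=
  cs.ext_simple <| by rintro (i | j) <;> simp [ofProd]

theorem toProd_comp_ofProd :
    (cs.toProd cs₁ cs₂).comp (cs.ofProd cs₁ cs₂) = MonoidHom.id (W₁ × W₂) := by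
  ext ⟨a, b⟩ <;>
    simp [ofProd, ← MonoidHom.comp_apply, toProd_comp_inlHom, toProd_comp_inrHom]

def prodEquiv : W ≃* W₁ × W₂ :=
  MonoidHom.toMulEquiv _ _ (cs.ofProd_comp_toProd cs₁ cs₂) (cs.toProd_comp_ofProd cs₁ cs₂)

@[simp]
theorem prodEquiv_apply (w : W) : cs.prodEquiv cs₁ cs₂ w = cs.toProd cs₁ cs₂ w :=
  rfl

theorem length_eq_length_fst_add_length_snd (w : W) :
    cs.length w =
      cs₁.length (cs.prodEquiv cs₁ cs₂ w).1 + cs₂.length (cs.prodEquiv cs₁ cs₂ w).2 := by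
  set e := cs.prodEquiv cs₁ cs₂
  apply le_antisymm
  · calc cs.length w = cs.length (cs.inlHom cs₁ (e w).1 * cs.inrHom cs₂ (e w).2) := by
          conv_lhs => rw [← e.symm_apply_apply w]
          rfl
      _ ≤ cs.length (cs.inlHom cs₁ (e w).1) + cs.length (cs.inrHom cs₂ (e w).2) :=
          cs.length_mul_le _ _
      _ ≤ cs₁.length (e w).1 + cs₂.length (e w).2 := by
          gcongr
          · exact cs₁.length_map_le cs _ (fun i => by simp [length_simple]) _
          · exact cs₂.length_map_le cs _ (fun j => by simp [length_simple]) _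
  · refine cs.le_length_of_simple_mul (L := fun w => cs₁.length (e w).1 + cs₂.length (e w).2)
      (by simp) ?_ w
    rintro (i | j) w
    · have := cs₁.length_mul_le (cs₁.simple i) (e w).1
      simp only [e, prodEquiv_apply, map_mul, toProd_simple_inl, Prod.fst_mul, Prod.snd_mul,
        one_mul, length_simple] at this ⊢
      omega
    · have := cs₂.length_mul_le (cs₂.simple j) (e w).2
      simp only [e, prodEquiv_apply, map_mul, toProd_simple_inr, Prod.fst_mul, Prod.snd_mul,
        one_mul, length_simple] at this ⊢
      omega

theorem weakLE_iff_weakLE_prodEquiv (v w : W) :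
    weakLE cs v w ↔ weakLE cs₁ (cs.prodEquiv cs₁ cs₂ v).1 (cs.prodEquiv cs₁ cs₂ w).1 ∧
      weakLE cs₂ (cs.prodEquiv cs₁ cs₂ v).2 (cs.prodEquiv cs₁ cs₂ w).2 := by
  have h₁ := cs₁.length_le_length_add_length_inv_mul (cs.prodEquiv cs₁ cs₂ v).1
    (cs.prodEquiv cs₁ cs₂ w).1
  have h₂ := cs₂.length_le_length_add_length_inv_mul (cs.prodEquiv cs₁ cs₂ v).2
    (cs.prodEquiv cs₁ cs₂ w).2
  simp only [weakLE_iff_le, cs.length_eq_length_fst_add_length_snd cs₁ cs₂, map_mul, map_inv,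
    Prod.fst_mul, Prod.snd_mul, Prod.fst_inv, Prod.snd_inv]
  omega

def weakLERelIso :
    weakLE cs ≃r fun p q : W₁ × W₂ => weakLE cs₁ p.1 q.1 ∧ weakLE cs₂ p.2 q.2 where
  toEquiv := (cs.prodEquiv cs₁ cs₂).toEquiv
  map_rel_iff' := (cs.weakLE_iff_weakLE_prodEquiv cs₁ cs₂ _ _).symm

theorem exists_infinite_isAntichain_weakLE_iff_or :
    (∃ A : Set W, A.Infinite ∧ IsAntichain (weakLE cs) A) ↔
      (∃ A₁ : Set W₁, A₁.Infinite ∧ IsAntichain (weakLE cs₁) A₁) ∨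
        (∃ A₂ : Set W₂, A₂.Infinite ∧ IsAntichain (weakLE cs₂) A₂) := by
  simp only [exists_infinite_isAntichain_weakLE_iff]
  rw [← not_and_or, ← wellQuasiOrdered_prod_iff, (cs.weakLERelIso cs₁ cs₂).wellQuasiOrdered_iff]

end Reducible

end CoxeterSystem

/-- For a reducible Coxeter group `W = W₁ × W₂` (diagram a disjoint union),
the right weak order on `W` is isomorphic to the product of the right weak
orders on `W₁` and `W₂`; consequently `W` contains an infinite antichain in
the right weak order iff `W₁` or `W₂` does. -/
theorem reducible_weak_order_product {B₁ B₂ : Type*} {W W₁ W₂ : Type*}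
    [Group W] [Group W₁] [Group W₂]
    {M₁ : CoxeterMatrix B₁} {M₂ : CoxeterMatrix B₂}
    (cs : CoxeterSystem (M₁.sumMatrix M₂) W)
    (cs₁ : CoxeterSystem M₁ W₁) (cs₂ : CoxeterSystem M₂ W₂) :
    ∃ e : W ≃* W₁ × W₂,
      (∀ i : B₁, e (cs.simple (.inl i)) = (cs₁.simple i, 1)) ∧
      (∀ i : B₂, e (cs.simple (.inr i)) = (1, cs₂.simple i)) ∧
      (∀ v w : W, weakLE cs v w ↔
        weakLE cs₁ (e v).1 (e w).1 ∧ weakLE cs₂ (e v).2 (e w).2) ∧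
      ((∃ A : Set W, A.Infinite ∧ IsAntichain (weakLE cs) A) ↔
        (∃ A₁ : Set W₁, A₁.Infinite ∧ IsAntichain (weakLE cs₁) A₁) ∨
        (∃ A₂ : Set W₂, A₂.Infinite ∧ IsAntichain (weakLE cs₂) A₂)) :=
  ⟨cs.prodEquiv cs₁ cs₂, cs.toProd_simple_inl cs₁ cs₂, cs.toProd_simple_inr cs₁ cs₂,
    cs.weakLE_iff_weakLE_prodEquiv cs₁ cs₂, cs.exists_infinite_isAntichain_weakLE_iff_or cs₁ cs₂⟩
end
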